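/- Let X be a smooth manifold, C ⊂ X a closed submanifold with vanishing ideal I ⊂ C^∞(X), and let g_I be the space of multivector fields adapted to C. Then g_I[1] is a graded Lie subalgebra of Γ(X, Λ TX)[1] with respect to the Schouten bracket: if x ∈ g_I^k and y ∈ g_I^l then [x, y]_S ∈ g_I^{k+l−1}. -/

import Mathlib

open scoped Manifold

noncomputable section

variable {E H M : Type*} [NormedAddCommGroup E] [NormedSpace ℝ E]
  [TopologicalSpace H] (I : ModelWithCorners ℝ E H)
  [TopologicalSpace M] [ChartedSpace H M] [IsManifold I (⊤ : ℕ∞) M]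

/-- The commutative ring `A = C^∞(X)` of smooth functions on the manifold `X = M`. -/
abbrev SmoothA := ContMDiffMap I 𝓘(ℝ, ℝ) M ℝ (⊤ : ℕ∞)

/-- A `(k+1)`-vector field encoded as a skew-symmetric multiderivation of
`A = C^∞(X)` (the standard identification `Γ(ΛTX) ≅` alternating multiderivations). -/
structure IsMultiDerivation {k : ℕ} (X : (Fin (k + 1) → SmoothA I (M := M)) → SmoothA I (M := M)) : Prop where
  map_add : ∀ (g : Fin (k + 1) → SmoothA I (M := M)) (j : Fin (k + 1)) (a b : SmoothA I (M := M)),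
    X (Function.update g j (a + b)) = X (Function.update g j a) + X (Function.update g j b)
  map_smul : ∀ (g : Fin (k + 1) → SmoothA I (M := M)) (j : Fin (k + 1)) (c : ℝ) (a : SmoothA I (M := M)),
    X (Function.update g j (c • a)) = c • X (Function.update g j a)
  alternating : ∀ (g : Fin (k + 1) → SmoothA I (M := M)) (i j : Fin (k + 1)),
    i ≠ j → g i = g j → X g = 0
  leibniz : ∀ (g : Fin (k + 1) → SmoothA I (M := M)) (j : Fin (k + 1)) (a b : SmoothA I (M := M)),
    X (Function.update g j (a * b)) =
      a * X (Function.update g j b) + b * X (Function.update g j a)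

/-- Membership in `g_I`: the multivector field sends tuples of functions vanishing
on `C` to a function vanishing on `C` (equivalently, it vanishes on tuples of
covectors annihilating `TC`). -/
def AdaptedDer (C : Set M) {k : ℕ}
    (X : (Fin (k + 1) → SmoothA I (M := M)) → SmoothA I (M := M)) : Prop :=
  ∀ g : Fin (k + 1) → SmoothA I (M := M),
    (∀ i, ∀ x ∈ C, g i x = 0) → ∀ x ∈ C, X g x = 0

/-- One half of the Schouten bracket: the shuffle sum
`(X •̄ Y)(f₁,…,f_{k+l-1}) = Σ_{σ ∈ Sh(l, k-1)} sign(σ) X(Y(f_{σ(1)},…,f_{σ(l)}), f_{σ(l+1)},…)`. -/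
def schHalf {k m : ℕ}
    (X : (Fin (k + 1) → SmoothA I (M := M)) → SmoothA I (M := M))
    (Y : (Fin (m + 1) → SmoothA I (M := M)) → SmoothA I (M := M))
    (f : Fin (k + m + 1) → SmoothA I (M := M)) : SmoothA I (M := M) :=
  ∑ σ : Equiv.Perm (Fin (k + m + 1)),
    if (∀ i j : Fin (m + 1), i < j →
          σ (Fin.castLE (by omega) i) < σ (Fin.castLE (by omega) j)) ∧
       (∀ i j : Fin k, i < j →
          σ ⟨m + 1 + (i : ℕ), by have := i.isLt; omega⟩ <
            σ ⟨m + 1 + (j : ℕ), by have := j.isLt; omega⟩) then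
      ((Equiv.Perm.sign σ : ℤˣ) : ℤ) •
        X (Fin.cons (Y (fun i : Fin (m + 1) => f (σ (Fin.castLE (by omega) i))))
          (fun j : Fin k => f (σ ⟨m + 1 + (j : ℕ), by have := j.isLt; omega⟩)))
    else 0

/-- The Schouten bracket `[X,Y]_S = X •̄ Y − (−1)^{(k-1)(l-1)} Y •̄ X` of
multivector fields, in the multiderivation realization. -/
def schoutenBr {k m : ℕ}
    (X : (Fin (k + 1) → SmoothA I (M := M)) → SmoothA I (M := M))
    (Y : (Fin (m + 1) → SmoothA I (M := M)) → SmoothA I (M := M))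
    (f : Fin (k + m + 1) → SmoothA I (M := M)) : SmoothA I (M := M) :=
  schHalf I X Y f -
    ((-1 : ℤ) ^ (k * m)) • schHalf I Y X (fun j => f (Fin.cast (by omega) j))

/-!
Every summand of `[X, Y]_S (f)` is, up to an integer factor, `X (Y (f…), f…)` or `Y (X (f…), f…)`.
If all `fᵢ` lie in the vanishing ideal of `C`, adaptedness of the inner field puts its value in the
ideal, and then adaptedness of the outer field puts the whole summand there; the ideal is closed
under integer multiples, sums and differences.
-/

section Adapted

omit [IsManifold I (⊤ : ℕ∞) M]

def smoothVanishingIdeal (C : Set M) : Ideal (SmoothA I (M := M)) where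
  carrier := {g | ∀ x ∈ C, g x = 0}
  add_mem' ha hb x hx := by simp [ha x hx, hb x hx]
  zero_mem' _ _ := rfl
  smul_mem' a _ hb x hx := by simp [hb x hx]

variable {I} {C : Set M}

theorem adaptedDer_iff {k : ℕ} {X : (Fin (k + 1) → SmoothA I (M := M)) → SmoothA I (M := M)} :
    AdaptedDer I C X ↔
      ∀ g : Fin (k + 1) → SmoothA I (M := M),
        (∀ i, g i ∈ smoothVanishingIdeal I C) → X g ∈ smoothVanishingIdeal I C :=
  Iff.rfl

variable {k m : ℕ}
  {X : (Fin (k + 1) → SmoothA I (M := M)) → SmoothA I (M := M)}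
  {Y : (Fin (m + 1) → SmoothA I (M := M)) → SmoothA I (M := M)}

theorem schHalf_mem_smoothVanishingIdeal (hX : AdaptedDer I C X) (hY : AdaptedDer I C Y)
    {f : Fin (k + m + 1) → SmoothA I (M := M)} (hf : ∀ i, f i ∈ smoothVanishingIdeal I C) :
    schHalf I X Y f ∈ smoothVanishingIdeal I C := by
  refine Ideal.sum_mem _ fun _ _ => ?_
  split_ifs
  · refine zsmul_mem (adaptedDer_iff.mp hX _ fun i => ?_) _
    cases i using Fin.cases with
    | zero => exact adaptedDer_iff.mp hY _ fun _ => hf _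
    | succ => exact hf _
  · exact zero_mem _

theorem schoutenBr_mem_smoothVanishingIdeal (hX : AdaptedDer I C X) (hY : AdaptedDer I C Y)
    {f : Fin (k + m + 1) → SmoothA I (M := M)} (hf : ∀ i, f i ∈ smoothVanishingIdeal I C) :
    schoutenBr I X Y f ∈ smoothVanishingIdeal I C :=
  sub_mem (schHalf_mem_smoothVanishingIdeal hX hY hf)
    (zsmul_mem (schHalf_mem_smoothVanishingIdeal hY hX fun _ => hf _) _)

end Adapted

theorem schouten_bracket_adapted (C : Set M) (k m : ℕ)
    (X : (Fin (k + 1) → SmoothA I (M := M)) → SmoothA I (M := M))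
    (Y : (Fin (m + 1) → SmoothA I (M := M)) → SmoothA I (M := M))
    (hXa : AdaptedDer I C X) (hYa : AdaptedDer I C Y) :
    ∀ f : Fin (k + m + 1) → SmoothA I (M := M),
      (∀ i, ∀ x ∈ C, f i x = 0) → ∀ x ∈ C, schoutenBr I X Y f x = 0 :=
  fun _ hf => schoutenBr_mem_smoothVanishingIdeal hXa hYa hf

end
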